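/- arXiv:0711.0660 — 7 statements merged into one kernel-verified Lean document; each statement's English description precedes it below -/
import Mathlib

section
/- Assume η_n → 0. Then the hard-thresholding estimator is uniformly consistent: for every ε > 0, sup_{θ∈ℝ} P_{n,θ}(|θ̂_H − θ| > ε) → 0 as n → ∞. -/
/-!
If the hard-thresholding estimate is kept, its error is `|Z|/√n`; if it is killed, then
`|θ| ≤ |ȳ| + |Z|/√n ≤ η_n + |Z|/√n`. Either way the error exceeds `ε` only if
`|Z| > √n (ε - η_n)`, an event that no longer depends on `θ` and whose probability tends to `0`
because `√n (ε - η_n) → ∞` and the Gaussian law is tight.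
-/

open MeasureTheory ProbabilityTheory Real Filter Topology Set

noncomputable def stdGauss : Measure ℝ := gaussianReal 0 1

/-- Standard normal cdf. -/
noncomputable def Phi (x : ℝ) : ℝ := (stdGauss (Set.Iic x)).toReal

/-- Standard normal density. -/
noncomputable def phi (x : ℝ) : ℝ := gaussianPDFReal 0 1 x

/-- Hard-thresholding estimator. -/
noncomputable def hardThresh (η y : ℝ) : ℝ := if η < |y| then y else 0

/-- Soft-thresholding (LASSO) estimator. -/
noncomputable def softThresh (η y : ℝ) : ℝ := Real.sign y * max (|y| - η) 0

/-- SCAD estimator. -/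
noncomputable def scadThresh (a η y : ℝ) : ℝ :=
  if |y| ≤ 2 * η then Real.sign y * max (|y| - η) 0
  else if |y| ≤ a * η then ((a - 1) * y - Real.sign y * a * η) / (a - 2)
  else y

instance isProbabilityMeasure_stdGauss : IsProbabilityMeasure stdGauss := by
  unfold stdGauss; infer_instance

lemma abs_hardThresh_sub_le (η y θ : ℝ) : |hardThresh η y - θ| ≤ |η| + |y - θ| := by
  unfold hardThresh
  split_ifs with hkeep
  · exact le_add_of_nonneg_left (abs_nonneg η)
  · calc |0 - θ| = |(y - θ) - y| := by ring_nf
      _ ≤ |y - θ| + |y| := abs_sub _ _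
      _ ≤ |y - θ| + |η| := by linarith [(not_lt.mp hkeep).trans (le_abs_self η)]
      _ = |η| + |y - θ| := add_comm _ _

lemma hardThresh_error_subset {s : ℝ} (hs : 0 < s) (η θ ε : ℝ) :
    {z : ℝ | ε < |hardThresh η (θ + z / s) - θ|} ⊆ {z : ℝ | s * (ε - |η|) < |z|} := by
  intro z hz
  have hbound := abs_hardThresh_sub_le η (θ + z / s) θ
  rw [add_sub_cancel_left, abs_div, abs_of_pos hs] at hbound
  have hlt : ε - |η| < |z| / s := by linarith [hz.trans_le hbound]
  rwa [lt_div_iff₀ hs, mul_comm] at hlt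

lemma tendsto_measure_abs_gt_atTop (μ : Measure ℝ) [IsFiniteMeasure μ] :
    Tendsto (fun t : ℝ => μ {z | t < |z|}) atTop (𝓝 0) := by
  simpa using tendsto_measure_norm_gt_of_isTightMeasureSet (isTightMeasureSet_singleton (μ := μ))

theorem stmt_5_general (η : ℕ → ℝ) (hη0 : Tendsto η atTop (𝓝 0)) :
    ∀ ε > (0 : ℝ),
      Tendsto (fun n : ℕ => ⨆ θ : ℝ,
          stdGauss {z : ℝ | ε < |hardThresh (η n) (θ + z / Real.sqrt n) - θ|})
        atTop (𝓝 0) := by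
  intro ε hε
  have hradius : Tendsto (fun n : ℕ => √n * (ε - |η n|)) atTop atTop := by
    refine (tendsto_sqrt_atTop.comp tendsto_natCast_atTop_atTop).atTop_mul_pos hε ?_
    simpa using tendsto_const_nhds.sub hη0.abs
  refine tendsto_of_tendsto_of_tendsto_of_le_of_le' tendsto_const_nhds
    ((tendsto_measure_abs_gt_atTop stdGauss).comp hradius) (.of_forall fun _ => zero_le) ?_
  filter_upwards [eventually_gt_atTop 0] with n hn
  exact iSup_le fun θ => measure_mono (hardThresh_error_subset (by positivity) _ _ _)

theorem stmt_5 (η : ℕ → ℝ) (hηpos : ∀ n, 0 < η n) (hη0 : Tendsto η atTop (𝓝 0)) :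
    ∀ ε > (0 : ℝ),
      Tendsto (fun n : ℕ => ⨆ θ : ℝ,
          stdGauss {z : ℝ | ε < |hardThresh (η n) (θ + z / Real.sqrt n) - θ|})
        atTop (𝓝 0) :=
  stmt_5_general η hη0
end

section
/- For any ε > 0 there is a bound: sup_{θ∈ℝ} P_{n,θ}(a_n|θ̂_H − θ| > M) ≤ Pr(|Z| > M/2) + Φ(−M/2 + 1) whenever M > 2, where a_n = min{√n, η_n^{-1}} and a_n·η_n ≤ 1, √n/a_n ≥ 1. -/
open MeasureTheory ProbabilityTheory Real Filter Topology Set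

theorem stmt_7 (η : ℝ) (hη : 0 < η) (n : ℕ) (M : ℝ) (hM : 2 < M)
    (a : ℝ) (ha : a = min (Real.sqrt n) η⁻¹)
    (haη : a * η ≤ 1) (hna : 1 ≤ Real.sqrt n / a) :
    (⨆ θ : ℝ,
        (stdGauss {z : ℝ | M < a * |hardThresh η (θ + z / Real.sqrt n) - θ|}).toReal)
      ≤ (stdGauss {z : ℝ | M / 2 < |z|}).toReal + Phi (-M / 2 + 1) := by
  have hη' : 0 < η⁻¹ := inv_pos.mpr hη
  have hsn : 0 < Real.sqrt n := by
    rcases lt_or_eq_of_le (Real.sqrt_nonneg (n : ℝ)) with h | h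
    · exact h
    · exfalso
      rw [ha, ← h, min_eq_left hη'.le, div_zero] at hna
      linarith
  have hapos : 0 < a := by rw [ha]; exact lt_min hsn hη'
  have hasn : a ≤ Real.sqrt n := by rw [ha]; exact min_le_left _ _
  have hPhi : 0 ≤ Phi (-M / 2 + 1) := ENNReal.toReal_nonneg
  have hkey : ∀ w : ℝ, a * (|w| / Real.sqrt n) ≤ |w| := by
    intro w
    rw [← mul_div_assoc, div_le_iff₀ hsn]
    nlinarith [abs_nonneg w]
  haveI : IsProbabilityMeasure stdGauss := by unfold stdGauss; infer_instance
  apply ciSup_le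
  intro θ
  have hsub : {z : ℝ | M < a * |hardThresh η (θ + z / Real.sqrt n) - θ|}
      ⊆ {z : ℝ | M / 2 < |z|} := by
    intro z hz
    simp only [Set.mem_setOf_eq] at hz ⊢
    unfold hardThresh at hz
    by_cases hc : η < |θ + z / Real.sqrt n|
    · rw [if_pos hc] at hz
      have he : θ + z / Real.sqrt n - θ = z / Real.sqrt n := by ring
      rw [he, abs_div, abs_of_pos hsn] at hz
      linarith [hkey z]
    · rw [if_neg hc] at hz
      push_neg at hc
      rw [zero_sub, abs_neg] at hz
      have htri : |θ| ≤ |θ + z / Real.sqrt n| + |z| / Real.sqrt n := by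
        have h := abs_add_le (θ + z / Real.sqrt n) (-(z / Real.sqrt n))
        simp only [add_neg_cancel_right, abs_neg, abs_div, abs_of_pos hsn] at h
        exact h
      have h1 : |θ| ≤ η + |z| / Real.sqrt n := by linarith
      have h2 : a * |θ| ≤ a * η + a * (|z| / Real.sqrt n) := by nlinarith
      have h3 : M < 1 + |z| := by linarith [hkey z]
      linarith
  have hmono := ENNReal.toReal_mono (measure_ne_top stdGauss _) (measure_mono hsub)
  linarith
end

section
/- The SCAD estimator is sandwiched between soft- and hard-thresholding: if θ̂_S ≥ 0 then θ̂_S ≤ θ̂_SCAD ≤ θ̂_H, and if θ̂_S ≤ 0 then θ̂_H ≤ θ̂_SCAD ≤ θ̂_S. -/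
open MeasureTheory ProbabilityTheory Real Filter Topology Set

set_option maxHeartbeats 1000000 in
theorem stmt_9 (a η y : ℝ) (hη : 0 < η) (ha : 2 < a) :
    (0 ≤ softThresh η y →
      softThresh η y ≤ scadThresh a η y ∧ scadThresh a η y ≤ hardThresh η y) ∧
    (softThresh η y ≤ 0 →
      hardThresh η y ≤ scadThresh a η y ∧ scadThresh a η y ≤ softThresh η y) := by
  have h2 : (0:ℝ) < a - 2 := by linarith
  unfold softThresh scadThresh hardThresh
  rcases lt_trichotomy y 0 with hy | hy | hy
  · rw [Real.sign_of_neg hy, abs_of_neg hy]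
    rcases le_or_gt (-y) η with h1 | h1
    · rw [max_eq_right (by linarith)]
      split_ifs <;> constructor <;> intro h <;> constructor <;> nlinarith
    · rw [max_eq_left (by linarith)]
      split_ifs with h3 h4 <;> constructor <;> intro h <;> constructor <;>
        first
        | nlinarith
        | (rw [div_le_iff₀ h2]; nlinarith)
        | (rw [le_div_iff₀ h2]; nlinarith)
  · subst hy
    simp [Real.sign_zero, abs_zero, not_lt.mpr hη.le, (by linarith : (0:ℝ) ≤ 2*η)]
  · rw [Real.sign_of_pos hy, abs_of_pos hy]
    rcases le_or_gt y η with h1 | h1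
    · rw [max_eq_right (by linarith)]
      split_ifs <;> constructor <;> intro h <;> constructor <;> nlinarith
    · rw [max_eq_left (by linarith)]
      split_ifs with h3 h4 <;> constructor <;> intro h <;> constructor <;>
        first
        | nlinarith
        | (rw [div_le_iff₀ h2]; nlinarith)
        | (rw [le_div_iff₀ h2]; nlinarith)
end

section
/- In the Gaussian location model, the distribution of √n(θ̂_H − θ) is the mixture {Φ(√n(−θ+η_n)) − Φ(√n(−θ−η_n))}·δ_{−√n·θ} + μ, where μ is the absolutely continuous measure with Lebesgue density x ↦ φ(x)·1(|x + √n·θ| > √n·η_n). -/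
open MeasureTheory ProbabilityTheory Real Filter Topology Set

/-!
After rescaling, `√n (θ̂_H - θ)` equals `z` when `√n η < |z + √n θ|` and
`-√n θ` otherwise. A map that is the identity on a set `T` and constant `c` off it pushes
`μ` forward to `μ Tᶜ • δ_c + μ|_T`. Here `Tᶜ` is the interval
`[√n(-θ-η), √n(-θ+η)]`, of Gaussian mass `Φ(√n(-θ+η)) - Φ(√n(-θ-η))`, and the restriction of
the Gaussian to `T` has density `φ · 1_T`.
-/

lemma hardThresh_mul_mul {c : ℝ} (hc : 0 < c) (η y : ℝ) :
    hardThresh (c * η) (c * y) = c * hardThresh η y := by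
  simp only [hardThresh, abs_mul, abs_of_pos hc, mul_lt_mul_iff_right₀ hc]
  split_ifs <;> simp

lemma hardThresh_add_sub (η a z : ℝ) :
    hardThresh η (z + a) - a = if η < |z + a| then z else -a := by
  unfold hardThresh
  split_ifs <;> ring

lemma sqrt_mul_hardThresh_sub {s : ℝ} (hs : 0 < s) (η θ z : ℝ) :
    s * (hardThresh η (θ + z / s) - θ) = if s * η < |z + s * θ| then z else -(s * θ) := by
  have hy : s * (θ + z / s) = z + s * θ := by field_simp; ring
  rw [mul_sub, ← hardThresh_mul_mul hs, hy, hardThresh_add_sub]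

lemma MeasureTheory.Measure.map_ite_id_const {α : Type*} [MeasurableSpace α]
    (μ : Measure α) {p : α → Prop} [DecidablePred p] (hp : MeasurableSet {x | p x}) (c : α) :
    μ.map (fun x => if p x then x else c) = μ {x | ¬ p x} • Measure.dirac c + μ.restrict {x | p x} := by
  have hf : Measurable (fun x => if p x then x else c) := measurable_id.ite hp measurable_const
  have h_on : (fun x => if p x then x else c) =ᵐ[μ.restrict {x | p x}] id := by
    filter_upwards [ae_restrict_mem hp] with x hx
    exact if_pos hx
  have h_off : (fun x => if p x then x else c) =ᵐ[μ.restrict {x | p x}ᶜ] fun _ => c := by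
    filter_upwards [ae_restrict_mem hp.compl] with x hx
    exact if_neg hx
  conv_lhs => rw [← Measure.restrict_add_restrict_compl (μ := μ) hp]
  rw [Measure.map_add _ _ hf, Measure.map_congr h_on, Measure.map_congr h_off, Measure.map_id,
    Measure.map_const, Measure.restrict_apply_univ, compl_ofPred, add_comm]

lemma measure_Icc_eq_ofReal_sub {μ : Measure ℝ} [IsProbabilityMeasure μ] [NullSingletonClass μ]
    (a b : ℝ) : μ (Icc a b) = ENNReal.ofReal (μ.real (Iic b) - μ.real (Iic a)) := by
  rw [← measure_congr Ioc_ae_eq_Icc, ← cdf_eq_real, ← cdf_eq_real, ← measure_cdf μ,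
    StieltjesFunction.measure_Ioc, measure_cdf]

instance : IsProbabilityMeasure stdGauss := by unfold stdGauss; infer_instance

instance : NullSingletonClass stdGauss :=
  ⟨fun x => (gaussianReal_absolutelyContinuous 0 one_ne_zero) (measure_singleton x)⟩

lemma stdGauss_Icc (a b : ℝ) : stdGauss (Icc a b) = ENNReal.ofReal (Phi b - Phi a) :=
  measure_Icc_eq_ofReal_sub a b

lemma stdGauss_restrict {s : Set ℝ} (hs : MeasurableSet s) :
    stdGauss.restrict s = volume.withDensity (s.indicator fun x => ENNReal.ofReal (phi x)) := by
  rw [withDensity_indicator hs, ← restrict_withDensity hs, stdGauss,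
    gaussianReal_of_var_ne_zero 0 one_ne_zero]
  rfl

theorem stmt_10_general (θ η : ℝ) (n : ℕ) (hn : 0 < n) :
    Measure.map (fun z => Real.sqrt n * (hardThresh η (θ + z / Real.sqrt n) - θ)) stdGauss
      = ENNReal.ofReal (Phi (Real.sqrt n * (-θ + η)) - Phi (Real.sqrt n * (-θ - η)))
          • Measure.dirac (-(Real.sqrt n * θ))
        + volume.withDensity (fun x => ENNReal.ofReal
            (if Real.sqrt n * η < |x + Real.sqrt n * θ| then phi x else 0)) := by
  set s := Real.sqrt n
  have hs : 0 < s := Real.sqrt_pos.mpr (by exact_mod_cast hn)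
  have hT : MeasurableSet {z : ℝ | s * η < |z + s * θ|} :=
    measurableSet_lt measurable_const (measurable_id.add_const _).abs
  have h_excluded : {z : ℝ | ¬ s * η < |z + s * θ|} = Icc (s * (-θ - η)) (s * (-θ + η)) := by
    ext z
    simp only [mem_ofPred_eq, not_lt, abs_le, mem_Icc]
    constructor <;> rintro ⟨h₁, h₂⟩ <;> constructor <;> linarith
  have h_density : (fun x => ENNReal.ofReal (if s * η < |x + s * θ| then phi x else 0))
      = {z : ℝ | s * η < |z + s * θ|}.indicator fun x => ENNReal.ofReal (phi x) := by
    ext x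
    by_cases hx : s * η < |x + s * θ| <;> simp [hx]
  simp_rw [sqrt_mul_hardThresh_sub hs]
  rw [Measure.map_ite_id_const _ hT, h_excluded, stdGauss_Icc, stdGauss_restrict hT, h_density]

theorem stmt_10 (θ η : ℝ) (hη : 0 < η) (n : ℕ) (hn : 0 < n) :
    Measure.map (fun z => Real.sqrt n * (hardThresh η (θ + z / Real.sqrt n) - θ)) stdGauss
      = ENNReal.ofReal (Phi (Real.sqrt n * (-θ + η)) - Phi (Real.sqrt n * (-θ - η)))
          • Measure.dirac (-(Real.sqrt n * θ))
        + volume.withDensity (fun x => ENNReal.ofReal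
            (if Real.sqrt n * η < |x + Real.sqrt n * θ| then phi x else 0)) :=
  stmt_10_general θ η n hn
end

section
/- In the Gaussian location model, the cdf of √n(θ̂_S − θ) is F_{S,n,θ}(x) = Φ(x + √n·η_n)·1(x ≥ −√n·θ) + Φ(x − √n·η_n)·1(x < −√n·θ). -/
open MeasureTheory ProbabilityTheory Real Filter Topology Set

lemma softThresh_eq (η y : ℝ) (hη : 0 < η) :
    softThresh η y = if η < y then y - η else if y < -η then y + η else 0 := by
  unfold softThresh
  rcases lt_trichotomy y 0 with hy|hy|hy
  · rw [Real.sign_of_neg hy, abs_of_neg hy]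
    rcases lt_or_ge y (-η) with h|h
    · rw [if_neg (by linarith), if_pos h, max_eq_left (by linarith)]; ring
    · rw [if_neg (by linarith), if_neg (not_lt.mpr h), max_eq_right (by linarith)]; ring
  · subst hy
    rw [Real.sign_zero, zero_mul, if_neg (by linarith), if_neg (by linarith)]
  · rw [Real.sign_of_pos hy, abs_of_pos hy, one_mul]
    rcases lt_or_ge η y with h|h
    · rw [if_pos h, max_eq_left (by linarith)]
    · rw [if_neg (not_lt.mpr h), if_neg (by linarith), max_eq_right (by linarith)]

theorem stmt_11 (θ η : ℝ) (hη : 0 < η) (n : ℕ) (hn : 0 < n) (x : ℝ) :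
    (stdGauss {z : ℝ | Real.sqrt n * (softThresh η (θ + z / Real.sqrt n) - θ) ≤ x}).toReal
      = Phi (x + Real.sqrt n * η) * (if -(Real.sqrt n * θ) ≤ x then 1 else 0)
        + Phi (x - Real.sqrt n * η) * (if x < -(Real.sqrt n * θ) then 1 else 0) := by
  set s := Real.sqrt n with hsdef
  have hs : 0 < s := Real.sqrt_pos.mpr (by exact_mod_cast hn)
  have hmain : ∀ z : ℝ, (s * (softThresh η (θ + z / s) - θ) ≤ x ↔
      (if -(s*θ) ≤ x then z ≤ x + s*η else z ≤ x - s*η)) := by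
    intro z
    have hw : z = s * (θ + z / s) - s * θ := by field_simp; ring
    set w := θ + z / s with hwdef
    rw [softThresh_eq η w hη]
    split_ifs with h1 h2 h3 h4 h5 h6 <;>
      constructor <;> intro hh <;> nlinarith [hw, mul_pos hs hη, hs.le]
  have hset : {z : ℝ | s * (softThresh η (θ + z / s) - θ) ≤ x}
      = Set.Iic (if -(s*θ) ≤ x then x + s*η else x - s*η) := by
    ext z
    simp only [Set.mem_setOf_eq, Set.mem_Iic, hmain z]
    split_ifs <;> rfl
  rw [hset]
  by_cases h : -(s*θ) ≤ x
  · rw [if_pos h, if_pos h, if_neg (not_lt.mpr h)]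
    simp [Phi]
  · rw [if_neg h, if_neg h, if_pos (not_le.mp h)]
    simp [Phi]
end

section
/- Suppose η_n → 0, √n·η_n → e with 0 ≤ e < ∞, and √n·θ_n → ν ∈ ℝ. Then the distribution of √n(θ̂_H − θ_n) under P_{n,θ_n} converges weakly to {Φ(−ν+e) − Φ(−ν−e)}·δ_{−ν} + (measure with density x ↦ φ(x)·1(|x+ν| > e)). -/
open MeasureTheory ProbabilityTheory Real Filter Topology Set

instance inst_s12 : NullSingletonClass stdGauss := nullSingletonClass_gaussianReal one_ne_zero

lemma Phi_eq_cdf : Phi = cdf stdGauss := by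
  funext x
  rw [cdf_eq_real, measureReal_def, Phi]

lemma withDensity_ofReal_phi_ite {p : ℝ → Prop} [DecidablePred p] (hp : MeasurableSet {x | p x}) :
    volume.withDensity (fun x => ENNReal.ofReal (if p x then phi x else 0))
      = stdGauss.restrict {x | p x} := by
  have hdens : (fun x => ENNReal.ofReal (if p x then phi x else 0))
      = {x | p x}.indicator (gaussianPDF 0 1) := by
    funext x
    by_cases hx : p x <;> simp [hx, gaussianPDF, phi]
  rw [hdens, withDensity_indicator hp, stdGauss, gaussianReal_of_var_ne_zero _ one_ne_zero,
    restrict_withDensity hp]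

lemma hardThresh_mul_left {c : ℝ} (hc : 0 < c) (η y : ℝ) :
    c * hardThresh η y = hardThresh (c * η) (c * y) := by
  simp only [hardThresh, abs_mul, abs_of_pos hc, mul_lt_mul_iff_right₀ hc]
  split_ifs <;> simp

lemma mul_hardThresh_add_div_sub {c : ℝ} (hc : 0 < c) (η θ z : ℝ) :
    c * (hardThresh η (θ + z / c) - θ) = hardThresh (c * η) (z + c * θ) - c * θ := by
  rw [mul_sub, hardThresh_mul_left hc, mul_add, mul_div_cancel₀ _ hc.ne', add_comm z]

@[fun_prop]
lemma measurable_hardThresh (η : ℝ) : Measurable (hardThresh η) :=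
  Measurable.ite (measurableSet_lt measurable_const measurable_abs) measurable_id measurable_const

lemma continuousAt_hardThresh {η y : ℝ} (h : |y| ≠ η) :
    ContinuousAt (fun p : ℝ × ℝ => hardThresh p.1 p.2) (η, y) := by
  rcases h.lt_or_gt with hlt | hgt
  · have hev : ∀ᶠ p : ℝ × ℝ in 𝓝 (η, y), |p.2| < p.1 :=
      continuousAt_snd.abs.eventually_lt continuousAt_fst hlt
    refine (continuousAt_const : ContinuousAt (fun _ : ℝ × ℝ => (0 : ℝ)) (η, y)).congr ?_
    filter_upwards [hev] with p hp
    simp [hardThresh, hp.not_gt]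
  · have hev : ∀ᶠ p : ℝ × ℝ in 𝓝 (η, y), p.1 < |p.2| :=
      continuousAt_fst.eventually_lt continuousAt_snd.abs hgt
    refine continuousAt_snd.congr ?_
    filter_upwards [hev] with p hp
    simp [hardThresh, hp]

lemma ae_tendsto_hardThresh_add_sub {ι : Type*} {l : Filter ι} {μ : Measure ℝ}
    [NullSingletonClass μ] {a b : ι → ℝ} {e ν : ℝ}
    (ha : Tendsto a l (𝓝 e)) (hb : Tendsto b l (𝓝 ν)) :
    ∀ᵐ z ∂μ, Tendsto (fun i => hardThresh (a i) (z + b i) - b i) l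
      (𝓝 (hardThresh e (z + ν) - ν)) := by
  have hboundary : {z : ℝ | |z + ν| = e} ⊆ {e - ν, -e - ν} := by
    intro z (hz : |z + ν| = e)
    rw [mem_insert_iff, mem_singleton_iff]
    rcases eq_or_eq_neg_of_abs_eq hz with h | h <;> [left; right] <;> linarith
  have hnull : ∀ᵐ z ∂μ, |z + ν| ≠ e :=
    measure_mono_null (fun z hz => hboundary (not_ne_iff.mp hz)) ((toFinite _).measure_zero μ)
  filter_upwards [hnull] with z hz
  exact ((continuousAt_hardThresh hz).tendsto.comp
    (ha.prodMk_nhds (tendsto_const_nhds.add hb))).sub hb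

lemma map_hardThresh_add_sub (μ : Measure ℝ) (e ν : ℝ) :
    μ.map (fun z => hardThresh e (z + ν) - ν)
      = μ {z | e < |z + ν|}ᶜ • Measure.dirac (-ν) + μ.restrict {z | e < |z + ν|} := by
  set A := {z : ℝ | e < |z + ν|}
  have hA : MeasurableSet A := measurableSet_lt measurable_const (by fun_prop)
  have hmeas : Measurable fun z => hardThresh e (z + ν) - ν := by fun_prop
  have hon : (fun z => hardThresh e (z + ν) - ν) =ᵐ[μ.restrict A] id := by
    filter_upwards [ae_restrict_mem hA] with z hz
    simp [hardThresh, show e < |z + ν| from hz]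
  have hoff : (fun z => hardThresh e (z + ν) - ν) =ᵐ[μ.restrict Aᶜ] fun _ => -ν := by
    filter_upwards [ae_restrict_mem hA.compl] with z hz
    simp [hardThresh, show ¬ e < |z + ν| from hz]
  conv_lhs => rw [← μ.restrict_add_restrict_compl hA]
  rw [Measure.map_add _ _ hmeas, Measure.map_congr hon, Measure.map_congr hoff, Measure.map_id,
    Measure.map_const, Measure.restrict_apply_univ, add_comm]

lemma compl_setOf_lt_abs_add (e ν : ℝ) : {z : ℝ | e < |z + ν|}ᶜ = Icc (-ν - e) (-ν + e) := by
  ext z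
  simp only [mem_compl_iff, mem_ofPred_eq, not_lt, mem_Icc, abs_le]
  constructor <;> intro h <;> constructor <;> linarith [h.1, h.2]

lemma stdGauss_map_hardThresh_add_sub (e ν : ℝ) :
    stdGauss.map (fun z => hardThresh e (z + ν) - ν)
      = ENNReal.ofReal (Phi (-ν + e) - Phi (-ν - e)) • Measure.dirac (-ν)
        + volume.withDensity (fun x => ENNReal.ofReal (if e < |x + ν| then phi x else 0)) := by
  rw [map_hardThresh_add_sub, compl_setOf_lt_abs_add, stdGauss_Icc,
    withDensity_ofReal_phi_ite (measurableSet_lt measurable_const (by fun_prop))]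

theorem stmt_12_general (η θ : ℕ → ℝ) (e ν : ℝ)
    (hηe : Tendsto (fun n : ℕ => Real.sqrt n * η n) atTop (𝓝 e))
    (hθν : Tendsto (fun n : ℕ => Real.sqrt n * θ n) atTop (𝓝 ν)) :
    ∀ f : BoundedContinuousFunction ℝ ℝ,
      Tendsto (fun n : ℕ => ∫ x, f x ∂(Measure.map
            (fun z => Real.sqrt n * (hardThresh (η n) (θ n + z / Real.sqrt n) - θ n)) stdGauss))
        atTop
        (𝓝 (∫ x, f x ∂(ENNReal.ofReal (Phi (-ν + e) - Phi (-ν - e)) • Measure.dirac (-ν)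
          + volume.withDensity (fun x => ENNReal.ofReal
              (if e < |x + ν| then phi x else 0))))) := by
  have hae : ∀ᵐ z ∂stdGauss, Tendsto
      (fun n : ℕ => Real.sqrt n * (hardThresh (η n) (θ n + z / Real.sqrt n) - θ n)) atTop
      (𝓝 (hardThresh e (z + ν) - ν)) := by
    filter_upwards [ae_tendsto_hardThresh_add_sub hηe hθν] with z hz
    refine hz.congr' ?_
    filter_upwards [eventually_ge_atTop 1] with n hn
    exact (mul_hardThresh_add_div_sub (Real.sqrt_pos.mpr (by exact_mod_cast hn)) _ _ _).symm
  have hdist := tendstoInDistribution_of_ae_tendsto (fun n => by fun_prop) (by fun_prop) hae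
  rw [← stdGauss_map_hardThresh_add_sub]
  exact ProbabilityMeasure.tendsto_iff_forall_integral_tendsto.mp hdist.tendsto

theorem stmt_12 (η θ : ℕ → ℝ) (hηpos : ∀ n, 0 < η n) (e ν : ℝ) (he : 0 ≤ e)
    (hη0 : Tendsto η atTop (𝓝 0))
    (hηe : Tendsto (fun n : ℕ => Real.sqrt n * η n) atTop (𝓝 e))
    (hθν : Tendsto (fun n : ℕ => Real.sqrt n * θ n) atTop (𝓝 ν)) :
    ∀ f : BoundedContinuousFunction ℝ ℝ,
      Tendsto (fun n : ℕ => ∫ x, f x ∂(Measure.map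
            (fun z => Real.sqrt n * (hardThresh (η n) (θ n + z / Real.sqrt n) - θ n)) stdGauss))
        atTop
        (𝓝 (∫ x, f x ∂(ENNReal.ofReal (Phi (-ν + e) - Phi (-ν - e)) • Measure.dirac (-ν)
          + volume.withDensity (fun x => ENNReal.ofReal
              (if e < |x + ν| then phi x else 0))))) :=
  stmt_12_general η θ e ν hηe hθν
end

section
/- Suppose η_n → 0, √n·η_n → e with 0 ≤ e < ∞, and √n·θ_n → ν ∈ ℝ. Then the distribution of √n(θ̂_S − θ_n) under P_{n,θ_n} converges weakly to {Φ(−ν+e) − Φ(−ν−e)}·δ_{−ν} + (measure with density x ↦ φ(x+e)·1(x > −ν) + φ(x−e)·1(x < −ν)). -/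
/-!
Writing `ȳ = θ + z / √n`, the rescaled error `√n (θ̂_S - θ)` equals `s(√n η, √n θ + z) - √n θ`,
where `s(η, y) = (y - η)₊ - (-y - η)₊` is soft thresholding, extended to be jointly continuous in
`(η, y)`. Hence it converges for every `z` to `s(e, ν + z) - ν`, and almost sure convergence
implies convergence in distribution. The law of `s(e, ν + Z) - ν` is computed by cutting the
Gaussian at `-ν ∓ e`: on the middle interval the error is the constant `-ν`, on the outer
half-lines it is the translate `Z ± e`, which produces the shifted densities `φ(x ± e)`.
-/

open MeasureTheory ProbabilityTheory Real Filter Topology Set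

lemma tendsto_integral_map_of_ae_tendsto {Ω E : Type*} [MeasurableSpace Ω] {μ : Measure Ω}
    [IsProbabilityMeasure μ] [TopologicalSpace E] [MeasurableSpace E] [OpensMeasurableSpace E]
    {X : ℕ → Ω → E} {Z : Ω → E} (hX : ∀ n, AEMeasurable (X n) μ) (hZ : AEMeasurable Z μ)
    (hlim : ∀ᵐ ω ∂μ, Tendsto (fun n => X n ω) atTop (𝓝 (Z ω)))
    (f : BoundedContinuousFunction E ℝ) :
    Tendsto (fun n => ∫ x, f x ∂(μ.map (X n))) atTop (𝓝 (∫ x, f x ∂(μ.map Z))) :=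
  ProbabilityMeasure.tendsto_iff_forall_integral_tendsto.1
    (tendstoInDistribution_of_ae_tendsto hX hZ hlim).tendsto f

lemma integral_withDensity_ofReal {α : Type*} [MeasurableSpace α] {μ : Measure α} {d : α → ℝ}
    (hd : AEMeasurable d μ) (hd0 : ∀ x, 0 ≤ d x) (g : α → ℝ) :
    ∫ x, g x ∂(μ.withDensity fun x => ENNReal.ofReal (d x)) = ∫ x, d x * g x ∂μ := by
  rw [integral_withDensity_eq_integral_toReal_smul₀ hd.ennreal_ofReal
    (ae_of_all _ fun _ => ENNReal.ofReal_lt_top)]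
  simp only [ENNReal.toReal_ofReal (hd0 _), smul_eq_mul]

lemma MeasureTheory.Integrable.mul_comp_boundedContinuous {α : Type*} [MeasurableSpace α]
    {μ : Measure α} {d : α → ℝ} (hd : Integrable d μ) (f : BoundedContinuousFunction ℝ ℝ)
    {G : α → ℝ} (hG : Measurable G) : Integrable (fun x => d x * f (G x)) μ :=
  hd.mul_bdd (f.continuous.measurable.comp hG).aestronglyMeasurable
    (ae_of_all _ fun _ => f.norm_coe_le_norm _)

lemma integral_eq_setIntegral_Iio_add_Icc_add_Ioi {E : Type*} [NormedAddCommGroup E]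
    [NormedSpace ℝ E] {μ : Measure ℝ} {g : ℝ → E} (hg : Integrable g μ) {a b : ℝ} (hab : a ≤ b) :
    ∫ x, g x ∂μ = ∫ x in Iio a, g x ∂μ + ∫ x in Icc a b, g x ∂μ + ∫ x in Ioi b, g x ∂μ := by
  rw [← setIntegral_union (Iio_disjoint_Ici le_rfl |>.mono_right Icc_subset_Ici_self)
    measurableSet_Icc hg.integrableOn hg.integrableOn, Iio_union_Icc_eq_Iic hab,
    intervalIntegral.integral_Iic_add_Ioi hg.integrableOn hg.integrableOn]

lemma setIntegral_preimage_add_const {E : Type*} [NormedAddCommGroup E] [NormedSpace ℝ E]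
    (g : ℝ → E) (c : ℝ) (s : Set ℝ) :
    ∫ x in (· + c) ⁻¹' s, g (x + c) = ∫ y in s, g y :=
  (measurePreserving_add_right volume c).setIntegral_preimage_emb
    (measurableEmbedding_addRight c) g s

/-- Agrees with `softThresh η` for `η ≥ 0` (`softThresh_eq_shrink`) but, unlike it, is jointly
continuous in `(η, y)`. -/
noncomputable def shrink (η y : ℝ) : ℝ := max (y - η) 0 - max (-y - η) 0

lemma softThresh_eq_shrink {η : ℝ} (hη : 0 ≤ η) : softThresh η = shrink η := by
  ext y
  unfold softThresh shrink
  rcases lt_trichotomy y 0 with hy | rfl | hy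
  · rw [Real.sign_of_neg hy, abs_of_neg hy, max_eq_right (by linarith : y - η ≤ 0)]
    ring
  · simp
  · rw [Real.sign_of_pos hy, abs_of_pos hy, max_eq_right (by linarith : -y - η ≤ 0)]
    ring

@[fun_prop]
lemma continuous_shrink (η : ℝ) : Continuous (shrink η) := by
  unfold shrink; fun_prop

lemma Filter.Tendsto.shrink {α : Type*} {l : Filter α} {a b : α → ℝ} {η y : ℝ}
    (ha : Tendsto a l (𝓝 η)) (hb : Tendsto b l (𝓝 y)) :
    Tendsto (fun x => shrink (a x) (b x)) l (𝓝 (shrink η y)) :=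
  ((hb.sub ha).max tendsto_const_nhds).sub ((hb.neg.sub ha).max tendsto_const_nhds)

lemma mul_shrink {c : ℝ} (hc : 0 ≤ c) (η y : ℝ) : c * shrink η y = shrink (c * η) (c * y) := by
  unfold shrink
  rw [mul_sub, mul_max_of_nonneg _ _ hc, mul_max_of_nonneg _ _ hc, mul_zero, mul_sub, mul_sub,
    mul_neg]

lemma shrink_of_abs_le {η y : ℝ} (h : |y| ≤ η) : shrink η y = 0 := by
  rw [abs_le] at h
  unfold shrink
  rw [max_eq_right (by linarith), max_eq_right (by linarith), sub_zero]

lemma shrink_of_lt {η y : ℝ} (hη : 0 ≤ η) (h : η < y) : shrink η y = y - η := by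
  unfold shrink
  rw [max_eq_left (by linarith), max_eq_right (by linarith), sub_zero]

lemma shrink_of_lt_neg {η y : ℝ} (hη : 0 ≤ η) (h : y < -η) : shrink η y = y + η := by
  unfold shrink
  rw [max_eq_right (by linarith), max_eq_left (by linarith)]
  ring

lemma tendsto_sqrt_mul_shrink_sub {η θ : ℕ → ℝ} {e ν : ℝ}
    (hηe : Tendsto (fun n : ℕ => √n * η n) atTop (𝓝 e))
    (hθν : Tendsto (fun n : ℕ => √n * θ n) atTop (𝓝 ν)) (z : ℝ) :
    Tendsto (fun n : ℕ => √n * (shrink (η n) (θ n + z / √n) - θ n)) atTop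
      (𝓝 (shrink e (ν + z) - ν)) := by
  refine ((hηe.shrink (hθν.add_const z)).sub hθν).congr' ?_
  filter_upwards [eventually_ge_atTop 1] with n hn
  have hs : 0 < √(n : ℝ) := Real.sqrt_pos.2 (by exact_mod_cast hn)
  rw [mul_sub, mul_shrink hs.le, mul_add, mul_div_cancel₀ _ hs.ne']

section Gaussian

lemma phi_nonneg (x : ℝ) : 0 ≤ phi x := gaussianPDFReal_nonneg 0 1 x

@[fun_prop]
lemma measurable_phi : Measurable phi := measurable_gaussianPDFReal 0 1

lemma integrable_phi : Integrable phi := integrable_gaussianPDFReal 0 1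

lemma Phi_mono : Monotone Phi := fun _ _ h =>
  ENNReal.toReal_mono (measure_ne_top _ _) (measure_mono (Iic_subset_Iic.2 h))

lemma integral_stdGauss (g : ℝ → ℝ) : ∫ x, g x ∂stdGauss = ∫ x, phi x * g x := by
  rw [stdGauss, gaussianReal_of_var_ne_zero 0 one_ne_zero]
  exact integral_withDensity_ofReal measurable_phi.aemeasurable phi_nonneg g

lemma setIntegral_phi_Icc {a b : ℝ} (hab : a ≤ b) : ∫ t in Icc a b, phi t = Phi b - Phi a := by
  have hPhi (x : ℝ) : Phi x = ∫ t in Iic x, phi t := by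
    rw [Phi, stdGauss, gaussianReal_apply_eq_integral 0 one_ne_zero]
    exact ENNReal.toReal_ofReal (integral_nonneg phi_nonneg)
  rw [hPhi, hPhi, integral_Icc_eq_integral_Ioc,
    intervalIntegral.integral_Iic_sub_Iic integrable_phi.integrableOn integrable_phi.integrableOn,
    intervalIntegral.integral_of_le hab]

end Gaussian

lemma integral_comp_shrink_stdGauss {e : ℝ} (he : 0 ≤ e) (ν : ℝ)
    (f : BoundedContinuousFunction ℝ ℝ) :
    ∫ z, f (shrink e (ν + z) - ν) ∂stdGauss =
      (Phi (-ν + e) - Phi (-ν - e)) * f (-ν) + (∫ x in Ioi (-ν), phi (x + e) * f x)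
        + ∫ x in Iio (-ν), phi (x - e) * f x := by
  have hint : Integrable fun z => phi z * f (shrink e (ν + z) - ν) :=
    integrable_phi.mul_comp_boundedContinuous f (by fun_prop)
  rw [integral_stdGauss,
    integral_eq_setIntegral_Iio_add_Icc_add_Ioi hint (by linarith : -ν - e ≤ -ν + e)]
  have hleft : ∫ z in Iio (-ν - e), phi z * f (shrink e (ν + z) - ν)
      = ∫ x in Iio (-ν), phi (x - e) * f x := by
    rw [← setIntegral_preimage_add_const (fun x => phi (x - e) * f x) e (Iio (-ν)),
      preimage_add_const_Iio]
    refine setIntegral_congr_fun measurableSet_Iio fun z hz => ?_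
    rw [shrink_of_lt_neg he (by linarith [mem_Iio.1 hz])]
    ring_nf
  have hmid : ∫ z in Icc (-ν - e) (-ν + e), phi z * f (shrink e (ν + z) - ν)
      = (Phi (-ν + e) - Phi (-ν - e)) * f (-ν) := by
    rw [← setIntegral_phi_Icc (by linarith), ← integral_mul_const]
    refine setIntegral_congr_fun measurableSet_Icc fun z hz => ?_
    rw [shrink_of_abs_le (abs_le.2 ⟨by linarith [hz.1], by linarith [hz.2]⟩), zero_sub]
  have hright : ∫ z in Ioi (-ν + e), phi z * f (shrink e (ν + z) - ν)
      = ∫ x in Ioi (-ν), phi (x + e) * f x := by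
    rw [← setIntegral_preimage_add_const (fun x => phi (x + e) * f x) (-e) (Ioi (-ν)),
      preimage_add_const_Ioi, sub_neg_eq_add]
    refine setIntegral_congr_fun measurableSet_Ioi fun z hz => ?_
    rw [shrink_of_lt he (by linarith [mem_Ioi.1 hz])]
    ring_nf
  rw [hleft, hmid, hright]
  ring

lemma integral_softThresh_limitLaw {e : ℝ} (he : 0 ≤ e) (ν : ℝ)
    (f : BoundedContinuousFunction ℝ ℝ) :
    ∫ x, f x ∂(ENNReal.ofReal (Phi (-ν + e) - Phi (-ν - e)) • Measure.dirac (-ν)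
        + volume.withDensity (fun x => ENNReal.ofReal
            ((if -ν < x then phi (x + e) else 0) + (if x < -ν then phi (x - e) else 0)))) =
      (Phi (-ν + e) - Phi (-ν - e)) * f (-ν) + (∫ x in Ioi (-ν), phi (x + e) * f x)
        + ∫ x in Iio (-ν), phi (x - e) * f x := by
  set d : ℝ → ℝ := (Ioi (-ν)).indicator (fun x => phi (x + e))
    + (Iio (-ν)).indicator (fun x => phi (x - e)) with hd_def
  have hd (x : ℝ) :
      (if -ν < x then phi (x + e) else 0) + (if x < -ν then phi (x - e) else 0) = d x := by
    simp only [hd_def, Pi.add_apply, indicator_apply, mem_Ioi, mem_Iio]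
  have hd0 (x : ℝ) : 0 ≤ d x :=
    add_nonneg (indicator_nonneg (fun _ _ => phi_nonneg _) _)
      (indicator_nonneg (fun _ _ => phi_nonneg _) _)
  have hright : Integrable fun x => phi (x + e) := integrable_phi.comp_add_right e
  have hleft : Integrable fun x => phi (x - e) := integrable_phi.comp_sub_right e
  have hd_int : Integrable d :=
    (hright.indicator measurableSet_Ioi).add (hleft.indicator measurableSet_Iio)
  have := isFiniteMeasure_withDensity_ofReal hd_int.2
  simp only [hd]
  rw [integral_add_measure ((f.integrable _).smul_measure ENNReal.ofReal_ne_top) (f.integrable _),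
    integral_smul_measure, integral_dirac, smul_eq_mul,
    ENNReal.toReal_ofReal (sub_nonneg.2 (Phi_mono (by linarith))),
    integral_withDensity_ofReal hd_int.aemeasurable hd0, hd_def]
  simp only [Pi.add_apply, add_mul, ← indicator_mul_left]
  rw [integral_add
      ((hright.mul_comp_boundedContinuous f measurable_id').indicator measurableSet_Ioi)
      ((hleft.mul_comp_boundedContinuous f measurable_id').indicator measurableSet_Iio),
    integral_indicator measurableSet_Ioi, integral_indicator measurableSet_Iio, add_assoc]

theorem stmt_13_general (η θ : ℕ → ℝ) (hηpos : ∀ n, 0 < η n) (e ν : ℝ) (he : 0 ≤ e)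
    (hηe : Tendsto (fun n : ℕ => Real.sqrt n * η n) atTop (𝓝 e))
    (hθν : Tendsto (fun n : ℕ => Real.sqrt n * θ n) atTop (𝓝 ν)) :
    ∀ f : BoundedContinuousFunction ℝ ℝ,
      Tendsto (fun n : ℕ => ∫ x, f x ∂(Measure.map
            (fun z => Real.sqrt n * (softThresh (η n) (θ n + z / Real.sqrt n) - θ n)) stdGauss))
        atTop
        (𝓝 (∫ x, f x ∂(ENNReal.ofReal (Phi (-ν + e) - Phi (-ν - e)) • Measure.dirac (-ν)
          + volume.withDensity (fun x => ENNReal.ofReal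
              ((if -ν < x then phi (x + e) else 0) + (if x < -ν then phi (x - e) else 0)))))) := by
  intro f
  have hsoft (n : ℕ) : softThresh (η n) = shrink (η n) := softThresh_eq_shrink (hηpos n).le
  have hZ : Continuous fun z => shrink e (ν + z) - ν := by fun_prop
  rw [integral_softThresh_limitLaw he, ← integral_comp_shrink_stdGauss he,
    ← integral_map hZ.aemeasurable f.continuous.aestronglyMeasurable]
  simp only [hsoft]
  exact tendsto_integral_map_of_ae_tendsto (fun n => by fun_prop) hZ.aemeasurable
    (ae_of_all _ (tendsto_sqrt_mul_shrink_sub hηe hθν)) f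

theorem stmt_13 (η θ : ℕ → ℝ) (hηpos : ∀ n, 0 < η n) (e ν : ℝ) (he : 0 ≤ e)
    (hη0 : Tendsto η atTop (𝓝 0))
    (hηe : Tendsto (fun n : ℕ => Real.sqrt n * η n) atTop (𝓝 e))
    (hθν : Tendsto (fun n : ℕ => Real.sqrt n * θ n) atTop (𝓝 ν)) :
    ∀ f : BoundedContinuousFunction ℝ ℝ,
      Tendsto (fun n : ℕ => ∫ x, f x ∂(Measure.map
            (fun z => Real.sqrt n * (softThresh (η n) (θ n + z / Real.sqrt n) - θ n)) stdGauss))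
        atTop
        (𝓝 (∫ x, f x ∂(ENNReal.ofReal (Phi (-ν + e) - Phi (-ν - e)) • Measure.dirac (-ν)
          + volume.withDensity (fun x => ENNReal.ofReal
              ((if -ν < x then phi (x + e) else 0) + (if x < -ν then phi (x - e) else 0)))))) :=
  stmt_13_general η θ hηpos e ν he hηe hθν
end
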